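/- arXiv:1808.04935 — 2 statements merged into one kernel-verified Lean document; each statement's English description precedes it below -/
import Mathlib

section
/- Let the discrete fBm wavelet cross-spectrum be 𝔼 d_fBm(2^j,k) d_fBm(a(n)2^{j'},k') where a(n) is a dyadic sequence tending to infinity. Under the decay condition sup_x |ψ̂(x)|(1+|x|)^α < ∞ with α > 1 and N_ψ ≥ 2, one has, uniformly in k, k': |𝔼 d_fBm(2^j,k) d_fBm(a(n)2^{j'},k')| ≤ O(a(n)^{2H + 1/2 − N_ψ}) + o(a(n)^{−1/2}) as n → ∞. -/
open MeasureTheory Real Filter Asymptotics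

/-- Discrete fBm wavelet cross-spectrum between octaves `j` and `J'`, at lag `r`:
`∫_{−π}^π e^{ixr} 𝓗_j(x) conj(𝓗_{J'}(x)) g(x) dx`, where
`g(x) = Σ_ℓ (σ²/C²(H)) |x+2πℓ|^{−(2H+1)}` and `C²(H) = π/(HΓ(2H)sin(πH))`. -/
noncomputable def crossSpecFBM (HH : ℕ → ℝ → ℂ) (H σ2 : ℝ) (j J' : ℕ) (r : ℝ) : ℂ :=
  ∫ x in Set.Ioc (-π) π,
    Complex.exp (Complex.I * (x : ℂ) * (r : ℂ)) * HH j x * (starRingEnd ℂ) (HH J' x)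
      * ((∑' ℓ : ℤ, σ2 * (H * Real.Gamma (2 * H) * Real.sin (π * H) / π)
          * |x + 2 * π * ℓ| ^ (-(2 * H + 1) : ℝ) : ℝ) : ℂ)

lemma aux_Iq (q : ℝ) : ∃ C₃ C₄ : ℝ, 0 ≤ C₃ ∧ 0 ≤ C₄ ∧ ∀ J : ℕ,
    (∫ x in (((2:ℝ)^J)⁻¹)..π, x ^ q) ≤ C₃ * (((2:ℝ)^J)⁻¹) ^ (q+1) + C₄ * (1 + (J:ℝ)) := by
  have hπ1 : (1:ℝ) < π := by linarith [Real.pi_gt_three]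
  have hl2 : (0:ℝ) < Real.log 2 := Real.log_pos (by norm_num)
  have hlπ : (0:ℝ) < Real.log π := Real.log_pos hπ1
  rcases eq_or_ne q (-1) with hq | hq
  · refine ⟨0, Real.log π + Real.log 2, le_rfl, by positivity, fun J => ?_⟩
    set δ : ℝ := ((2:ℝ)^J)⁻¹ with hδ
    have hδ0 : 0 < δ := by positivity
    have hδ1 : δ ≤ 1 := inv_le_one_of_one_le₀ (one_le_pow₀ (by norm_num))
    have h0 : (0:ℝ) ∉ Set.uIcc δ π := by
      rw [Set.uIcc_of_le (by linarith)]
      intro h; exact absurd h.1 (by linarith)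
    have : (∫ x in δ..π, x ^ q) = ∫ x in δ..π, x⁻¹ := by
      apply intervalIntegral.integral_congr
      intro x hx
      simp only [hq, Real.rpow_neg_one]
    rw [this, integral_inv h0, Real.log_div (by linarith) (ne_of_gt hδ0), hδ,
      Real.log_inv, Real.log_pow]
    have hJ0 : (0:ℝ) ≤ (J:ℝ) := Nat.cast_nonneg J
    nlinarith
  · refine ⟨|q+1|⁻¹, |q+1|⁻¹ * π ^ (q+1), by positivity, by positivity, fun J => ?_⟩
    set δ : ℝ := ((2:ℝ)^J)⁻¹ with hδ
    have hδ0 : 0 < δ := by positivity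
    have hδ1 : δ ≤ 1 := inv_le_one_of_one_le₀ (one_le_pow₀ (by norm_num))
    have h0 : (0:ℝ) ∉ Set.uIcc δ π := by
      rw [Set.uIcc_of_le (by linarith)]
      intro h; exact absurd h.1 (by linarith)
    rw [integral_rpow (Or.inr ⟨hq, h0⟩)]
    have hδq : (0:ℝ) < δ ^ (q+1) := Real.rpow_pos_of_pos hδ0 _
    have hπq : (0:ℝ) < π ^ (q+1) := Real.rpow_pos_of_pos (by linarith) _
    have hJ1 : (1:ℝ) ≤ 1 + (J:ℝ) := by linarith [(Nat.cast_nonneg J : (0:ℝ) ≤ (J:ℝ))]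
    have hE : q + 1 ≠ 0 := fun h => hq (by linarith)
    rcases lt_or_gt_of_ne hE with h | h
    · have h1 : (π ^ (q+1) - δ ^ (q+1)) / (q+1) = (δ ^ (q+1) - π ^ (q+1)) / (-(q+1)) := by
        rw [← neg_sub (π ^ (q+1)) (δ ^ (q+1)), neg_div_neg_eq]
      have h2 : (δ ^ (q+1) - π ^ (q+1)) / (-(q+1)) ≤ δ ^ (q+1) / (-(q+1)) := by
        gcongr <;> linarith
      have h3 : δ ^ (q+1) / (-(q+1)) = |q+1|⁻¹ * δ ^ (q+1) := by
        rw [abs_of_neg h, div_eq_inv_mul]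
      have h4 : (0:ℝ) ≤ |q+1|⁻¹ * π ^ (q+1) * (1 + (J:ℝ)) := by positivity
      linarith
    · have h2 : (π ^ (q+1) - δ ^ (q+1)) / (q+1) ≤ π ^ (q+1) / (q+1) := by
        gcongr <;> linarith
      have h3 : π ^ (q+1) / (q+1) = |q+1|⁻¹ * π ^ (q+1) := by
        rw [abs_of_pos h, div_eq_inv_mul]
      have h4 : |q+1|⁻¹ * π ^ (q+1) ≤ |q+1|⁻¹ * π ^ (q+1) * (1 + (J:ℝ)) := by
        nlinarith [mul_pos (inv_pos.2 (abs_pos.2 hE)) hπq]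
      have h5 : (0:ℝ) ≤ |q+1|⁻¹ * δ ^ (q+1) := by positivity
      linarith

lemma aux_G (cσ s : ℝ) (hcσ : 0 ≤ cσ) (hs : 1 < s) {x : ℝ} (hx : |x| ≤ π) :
    (∑' ℓ : ℤ, cσ * |x + 2*π*ℓ| ^ (-s)) ≤
      cσ * |x| ^ (-s) + cσ * π^(-s) * (∑' ℓ:ℤ, |(ℓ:ℝ)|^(-s)) := by
  have hπ0 : (0:ℝ) < π := Real.pi_pos
  have hZsum : Summable (fun ℓ : ℤ => |(ℓ:ℝ)| ^ (-s)) := Real.summable_abs_int_rpow hs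
  set b : ℤ → ℝ := fun ℓ => cσ * π^(-s) * |(ℓ:ℝ)|^(-s) + (if ℓ = 0 then cσ * |x|^(-s) else 0)
    with hb
  have hfb : ∀ ℓ : ℤ, cσ * |x + 2*π*ℓ| ^ (-s) ≤ b ℓ := by
    intro ℓ
    rcases eq_or_ne ℓ 0 with h0 | h0
    · simp only [hb, h0, if_true]
      simp only [Int.cast_zero, mul_zero, add_zero, abs_zero]
      rw [Real.zero_rpow (by linarith : -s ≠ 0)]
      simp
    · simp only [hb, h0, if_false, add_zero]
      have hl1 : (1:ℝ) ≤ |(ℓ:ℝ)| := by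
        rw [← Int.cast_abs]
        exact_mod_cast Int.one_le_abs h0
      have hπℓ : 0 < π * |(ℓ:ℝ)| := by positivity
      have hge : π * |(ℓ:ℝ)| ≤ |x + 2*π*ℓ| := by
        have h1 : |2*π*(ℓ:ℝ)| ≤ |x + 2*π*ℓ| + |x| := by
          calc |2*π*(ℓ:ℝ)| = |(x + 2*π*ℓ) + (-x)| := by ring_nf
          _ ≤ |x + 2*π*ℓ| + |(-x)| := abs_add_le _ _
          _ = |x + 2*π*ℓ| + |x| := by rw [abs_neg]
        have h2 : |2*π*(ℓ:ℝ)| = 2*π*|(ℓ:ℝ)| := by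
          rw [abs_mul]; rw [abs_of_pos (by positivity : (0:ℝ) < 2*π)]
        nlinarith
      have := Real.rpow_le_rpow_of_nonpos hπℓ hge (by linarith : -s ≤ 0)
      calc cσ * |x + 2*π*ℓ| ^ (-s) ≤ cσ * (π * |(ℓ:ℝ)|) ^ (-s) := by
            exact mul_le_mul_of_nonneg_left this hcσ
        _ = cσ * π^(-s) * |(ℓ:ℝ)|^(-s) := by
            rw [Real.mul_rpow (le_of_lt hπ0) (abs_nonneg _), mul_assoc]
  have hbsum : Summable b := by
    apply Summable.add
    · exact hZsum.mul_left _
    · exact summable_of_ne_finset_zero (s := {0}) (fun ℓ hℓ => by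
        simp only [Finset.mem_singleton] at hℓ; simp [hℓ])
  have hfsum : Summable (fun ℓ : ℤ => cσ * |x + 2*π*ℓ| ^ (-s)) := by
    apply Summable.of_nonneg_of_le (fun ℓ => by positivity) hfb hbsum
  calc (∑' ℓ : ℤ, cσ * |x + 2*π*ℓ| ^ (-s)) ≤ ∑' ℓ, b ℓ := Summable.tsum_le_tsum hfb hfsum hbsum
    _ = cσ * π^(-s) * (∑' ℓ:ℤ, |(ℓ:ℝ)|^(-s)) + cσ * |x|^(-s) := by
        rw [hb, Summable.tsum_add (hZsum.mul_left _) (summable_of_ne_finset_zero (s := {0})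
          (fun ℓ hℓ => by simp only [Finset.mem_singleton] at hℓ; simp [hℓ]))]
        rw [tsum_mul_left, tsum_ite_eq (0:ℤ) (fun _ => cσ * |x|^(-s))]
    _ = cσ * |x| ^ (-s) + cσ * π^(-s) * (∑' ℓ:ℤ, |(ℓ:ℝ)|^(-s)) := by ring

lemma aux_Bmeas (C D E c d ee : ℝ) :
    Measurable fun x : ℝ => C * min (D * |x| ^ c) ((E * |x|) ^ d) * |x| ^ ee := by
  have h1 : Measurable fun x : ℝ => |x| ^ c := by measurability
  have h2 : Measurable fun x : ℝ => (E * |x|) ^ d := by measurability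
  have h3 : Measurable fun x : ℝ => |x| ^ ee := by measurability
  exact (((h1.const_mul D).min h2).const_mul C).mul h3

set_option maxHeartbeats 4000000 in
lemma aux_master
    (H σ2 : ℝ) (hH : H ∈ Set.Ioo (0:ℝ) 1) (hσ2 : 0 < σ2)
    (Nψ : ℕ) (hNψ : 2 ≤ Nψ) (α : ℝ) (hα : 1 < α)
    (HH : ℕ → ℝ → ℂ) (Cb : ℝ) (hCb : 0 < Cb)
    (hbound : ∀ (J : ℕ) (x : ℝ), x ∈ Set.Ico (-π) π →
      ‖HH J x‖ ≤ Cb * (2:ℝ) ^ ((J:ℝ)/2) * |(2:ℝ) ^ J * x| ^ (Nψ : ℕ)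
        / (1 + (2:ℝ) ^ J * |x|) ^ (α + Nψ))
    (j : ℕ) :
    ∃ K₁ K₂ : ℝ, 0 ≤ K₁ ∧ 0 ≤ K₂ ∧ ∀ (J : ℕ) (r : ℝ),
      ‖crossSpecFBM HH H σ2 j J r‖ ≤
        K₁ * ((2:ℝ)^J) ^ (2*H + 1/2 - (Nψ:ℝ)) + K₂ * (1+(J:ℝ)) * ((2:ℝ)^J) ^ ((1:ℝ)/2 - α) := by
  obtain ⟨hH0, hH1⟩ := hH
  have hπ0 : (0:ℝ) < π := Real.pi_pos
  have hπ1 : (1:ℝ) < π := by linarith [Real.pi_gt_three]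
  have hs1 : (1:ℝ) < 2*H+1 := by linarith
  -- constants
  set cσ : ℝ := σ2 * (H * Real.Gamma (2 * H) * Real.sin (π * H) / π) with hcσdef
  have hcσ : 0 < cσ := by
    have hΓ : 0 < Real.Gamma (2*H) := Real.Gamma_pos_of_pos (by linarith)
    have hsin : 0 < Real.sin (π*H) := Real.sin_pos_of_pos_of_lt_pi (by positivity)
      (by nlinarith)
    positivity
  set Z : ℝ := ∑' ℓ:ℤ, |(ℓ:ℝ)|^(-(2*H+1)) with hZdef
  have hZ0 : 0 ≤ Z := tsum_nonneg (fun ℓ => by positivity)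
  set CK : ℝ := cσ * π^(-(2*H+1)) * Z with hCKdef
  have hCK0 : 0 ≤ CK := by positivity
  set c₁ : ℝ := Cb * (2:ℝ) ^ ((j:ℝ)/2) * ((2:ℝ)^j)^(Nψ:ℕ) with hc₁def
  have hc₁ : 0 < c₁ := by positivity
  set c₂ : ℝ := cσ + CK * π^(2*H+1) with hc₂def
  have hc₂ : 0 < c₂ := by positivity
  set CT : ℝ := c₁ * Cb * c₂ with hCTdef
  have hCT : 0 < CT := by positivity
  set p : ℝ := (Nψ:ℝ) - (2*H+1) with hpdef
  set q : ℝ := p - α with hqdef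
  set e : ℝ := (Nψ:ℝ) + p with hedef
  have hNψ2 : (2:ℝ) ≤ (Nψ:ℝ) := by exact_mod_cast hNψ
  have he0 : 0 < e := by rw [hedef, hpdef]; linarith
  have hp1 : -1 < p := by rw [hpdef]; linarith
  set γ : ℝ := 2*H + 1/2 - (Nψ:ℝ) with hγdef
  obtain ⟨C₃, C₄, hC₃, hC₄, hIq⟩ := aux_Iq q
  refine ⟨2*CT*(1+C₃), 2*CT*C₄, by positivity, by positivity, fun J r => ?_⟩
  -- scale quantities
  set A : ℝ := (2:ℝ)^J with hAdef
  have hA0 : (0:ℝ) < A := by positivity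
  have hA1 : (1:ℝ) ≤ A := one_le_pow₀ (by norm_num)
  set δ : ℝ := A⁻¹ with hδdef
  have hδ0 : 0 < δ := by positivity
  have hδ1 : δ ≤ 1 := inv_le_one_of_one_le₀ hA1
  have hδπ : δ < π := by linarith
  have hmul : ∀ a b : ℝ, A ^ a * A ^ b = A ^ (a + b) := fun a b => (Real.rpow_add hA0 a b).symm
  have hδpow : ∀ t : ℝ, δ ^ t = A ^ (-t) := by
    intro t
    rw [hδdef, ← Real.rpow_neg_one A, ← Real.rpow_mul (le_of_lt hA0)]
    norm_num
  have hA12 : (2:ℝ) ^ ((J:ℝ)/2) = A ^ ((1:ℝ)/2) := by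
    rw [hAdef, ← Real.rpow_natCast (2:ℝ) J, ← Real.rpow_mul (by norm_num : (0:ℝ) ≤ 2),
      mul_one_div]
  -- the dominating function
  set B : ℝ → ℝ := fun x =>
    CT * A ^ ((1:ℝ)/2) * min (A ^ ((Nψ:ℝ)) * |x| ^ ((Nψ:ℝ))) ((A*|x|) ^ (-α)) * |x| ^ p
    with hBdef
  have hBnn : ∀ x, 0 ≤ B x := by
    intro x
    apply mul_nonneg (mul_nonneg (mul_nonneg (le_of_lt hCT) (by positivity)) _) (by positivity)
    exact le_min (by positivity) (by positivity)
  have hBmeas : Measurable B := aux_Bmeas (CT * A ^ ((1:ℝ)/2)) (A ^ ((Nψ:ℝ))) A ((Nψ:ℝ)) (-α) p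
  -- even
  have hBev : ∀ x, B (-x) = B x := by intro x; simp only [hBdef, abs_neg]
  -- bound on [-π, π] pieces
  have hxNp : ∀ x : ℝ, ∀ t : ℝ, 0 < t → |x| ≤ t → |x| ^ ((Nψ:ℝ)) * |x| ^ p ≤ t ^ e := by
    intro x t ht hxt
    rcases eq_or_ne x 0 with h0 | h0
    · rw [h0]
      simp only [abs_zero]
      rw [Real.zero_rpow (Nat.cast_pos.mpr (by omega : 0 < Nψ)).ne', zero_mul]
      positivity
    · have hx0 : 0 < |x| := abs_pos.2 h0
      rw [← Real.rpow_add hx0, ← hedef]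
      exact Real.rpow_le_rpow (le_of_lt hx0) hxt (le_of_lt he0)
  have hBbdd : ∀ x : ℝ, |x| ≤ π → B x ≤ CT * A ^ ((1:ℝ)/2) * A ^ ((Nψ:ℝ)) * π ^ e := by
    intro x hx
    have h1 : B x ≤ CT * A ^ ((1:ℝ)/2) * (A ^ ((Nψ:ℝ)) * |x| ^ ((Nψ:ℝ))) * |x| ^ p := by
      rw [hBdef]
      apply mul_le_mul_of_nonneg_right _ (by positivity)
      exact mul_le_mul_of_nonneg_left (min_le_left _ _) (by positivity)
    calc B x ≤ CT * A ^ ((1:ℝ)/2) * (A ^ ((Nψ:ℝ)) * |x| ^ ((Nψ:ℝ))) * |x| ^ p := h1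
      _ = CT * A ^ ((1:ℝ)/2) * A ^ ((Nψ:ℝ)) * (|x| ^ ((Nψ:ℝ)) * |x| ^ p) := by ring
      _ ≤ CT * A ^ ((1:ℝ)/2) * A ^ ((Nψ:ℝ)) * π ^ e := by
          exact mul_le_mul_of_nonneg_left (hxNp x π hπ0 hx) (by positivity)
  -- interval integrability of B on subintervals of [-π, π]
  have hII : ∀ a b : ℝ, -π ≤ a → a ≤ b → b ≤ π → IntervalIntegrable B volume a b := by
    intro a b ha hab hb
    rw [intervalIntegrable_iff_integrableOn_Ioc_of_le hab]
    apply Measure.integrableOn_of_bounded (measure_Ioc_lt_top).ne hBmeas.aestronglyMeasurable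
    filter_upwards [ae_restrict_mem measurableSet_Ioc] with x hx
    rw [Real.norm_eq_abs, abs_of_nonneg (hBnn x)]
    exact hBbdd x (abs_le.2 ⟨by linarith [hx.1], by linarith [hx.2]⟩)
  -- pointwise estimate
  have hptwise : ∀ x : ℝ, x ∈ Set.Ico (-π) π →
      ‖Complex.exp (Complex.I * (x : ℂ) * (r : ℂ)) * HH j x * (starRingEnd ℂ) (HH J x)
        * ((∑' ℓ : ℤ, σ2 * (H * Real.Gamma (2 * H) * Real.sin (π * H) / π)
            * |x + 2 * π * ℓ| ^ (-(2 * H + 1) : ℝ) : ℝ) : ℂ)‖ ≤ B x := by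
    intro x hx
    simp only [← hcσdef]
    have hxabs : |x| ≤ π := abs_le.2 ⟨hx.1, le_of_lt hx.2⟩
    have hGnn : (0:ℝ) ≤ ∑' ℓ : ℤ, cσ * |x + 2 * π * ℓ| ^ (-(2 * H + 1) : ℝ) :=
      tsum_nonneg (fun ℓ => by positivity)
    have hG : (∑' ℓ : ℤ, cσ * |x + 2 * π * ℓ| ^ (-(2 * H + 1) : ℝ)) ≤
        cσ * |x| ^ (-(2*H+1)) + CK := by
      have h := aux_G cσ (2*H+1) (le_of_lt hcσ) hs1 hxabs
      rw [← hZdef, ← hCKdef] at h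
      exact h
    have hexp1 : ‖Complex.exp (Complex.I * (x : ℂ) * (r : ℂ))‖ = 1 := by
      rw [Complex.norm_exp]
      simp [Complex.mul_re, Complex.mul_im]
    rw [norm_mul, norm_mul, norm_mul, hexp1, one_mul, RCLike.norm_conj, Complex.norm_real,
      Real.norm_eq_abs, abs_of_nonneg hGnn]
    -- bound each factor
    have hHj : ‖HH j x‖ ≤ c₁ * |x| ^ ((Nψ:ℝ)) := by
      have h := hbound j x hx
      have hD1 : (1:ℝ) ≤ (1 + (2:ℝ)^j * |x|) ^ (α + Nψ) := by
        have h1 : ((1:ℝ)) ^ (α + (Nψ:ℝ)) ≤ (1 + (2:ℝ)^j * |x|) ^ (α + Nψ) :=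
          Real.rpow_le_rpow (by norm_num)
            (by nlinarith [abs_nonneg x, pow_pos (by norm_num : (0:ℝ)<2) j])
            (by linarith [hNψ2])
        rwa [Real.one_rpow] at h1
      have h2 : Cb * (2:ℝ) ^ ((j:ℝ)/2) * |(2:ℝ)^j * x| ^ (Nψ:ℕ)
          / (1 + (2:ℝ)^j * |x|) ^ (α + Nψ) ≤ Cb * (2:ℝ) ^ ((j:ℝ)/2) * |(2:ℝ)^j * x| ^ (Nψ:ℕ) :=
        div_le_self (by positivity) hD1
      have h3 : Cb * (2:ℝ) ^ ((j:ℝ)/2) * |(2:ℝ)^j * x| ^ (Nψ:ℕ) = c₁ * |x| ^ ((Nψ:ℝ)) := by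
        rw [abs_mul, abs_of_pos (by positivity : (0:ℝ) < (2:ℝ)^j), mul_pow,
          ← Real.rpow_natCast |x| Nψ, hc₁def]
        ring
      linarith
    have hHJ : ‖HH J x‖ ≤ Cb * A ^ ((1:ℝ)/2)
        * min (A ^ ((Nψ:ℝ)) * |x| ^ ((Nψ:ℝ))) ((A*|x|) ^ (-α)) := by
      have h := hbound J x hx
      rw [← hAdef, hA12] at h
      refine le_trans h ?_
      rw [mul_div_assoc]
      refine mul_le_mul_of_nonneg_left (le_min ?_ ?_) (by positivity)
      · have hD1 : (1:ℝ) ≤ (1 + A * |x|) ^ (α + Nψ) := by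
          have h1 : ((1:ℝ)) ^ (α + (Nψ:ℝ)) ≤ (1 + A * |x|) ^ (α + Nψ) :=
            Real.rpow_le_rpow (by norm_num)
              (by nlinarith [abs_nonneg x, hA0]) (by linarith [hNψ2])
          rwa [Real.one_rpow] at h1
        refine le_trans (div_le_self (by positivity) hD1) ?_
        rw [abs_mul, abs_of_pos hA0, mul_pow, ← Real.rpow_natCast A Nψ,
          ← Real.rpow_natCast |x| Nψ]
      · rcases eq_or_ne x 0 with h0 | h0
        · rw [h0]
          simp only [mul_zero, abs_zero]
          rw [zero_pow (by omega : Nψ ≠ 0), zero_div,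
            Real.zero_rpow (by linarith : -α ≠ 0)]
        · have hx0 : 0 < |x| := abs_pos.2 h0
          have ht0 : 0 < A * |x| := by positivity
          have hnum : |A * x| ^ (Nψ:ℕ) = (A*|x|) ^ ((Nψ:ℝ)) := by
            rw [abs_mul, abs_of_pos hA0, Real.rpow_natCast]
          have hden : (A*|x|) ^ (α + (Nψ:ℝ)) ≤ (1 + A * |x|) ^ (α + Nψ) :=
            Real.rpow_le_rpow (le_of_lt ht0) (by linarith) (by positivity)
          have hdpos : (0:ℝ) < (A*|x|) ^ (α + (Nψ:ℝ)) := Real.rpow_pos_of_pos ht0 _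
          calc |A * x| ^ (Nψ:ℕ) / (1 + A * |x|) ^ (α + Nψ)
              ≤ |A * x| ^ (Nψ:ℕ) / (A*|x|) ^ (α + (Nψ:ℝ)) :=
                div_le_div_of_nonneg_left (by positivity) hdpos hden
            _ = (A*|x|) ^ (-α) := by
                rw [hnum, Real.rpow_add ht0, Real.rpow_neg (le_of_lt ht0)]
                field_simp
                try ring
    have hinner : |x| ^ ((Nψ:ℝ)) * (cσ * |x| ^ (-(2*H+1)) + CK) ≤ c₂ * |x| ^ p := by
      rcases eq_or_ne x 0 with h0 | h0
      · rw [h0]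
        simp only [abs_zero]
        rw [Real.zero_rpow (Nat.cast_pos.mpr (by omega : 0 < Nψ)).ne', zero_mul]
        positivity
      · have hx0 : 0 < |x| := abs_pos.2 h0
        have e1 : |x| ^ ((Nψ:ℝ)) * |x| ^ (-(2*H+1)) = |x| ^ p := by
          rw [← Real.rpow_add hx0]
          congr 1
          try rw [hpdef]
          try ring
        have e2 : |x| ^ ((Nψ:ℝ)) ≤ π ^ (2*H+1) * |x| ^ p := by
          have h4 : |x| ^ ((Nψ:ℝ)) = |x| ^ (2*H+1) * |x| ^ p := by
            rw [← Real.rpow_add hx0]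
            congr 1
            try rw [hpdef]
            try ring
          rw [h4]
          exact mul_le_mul_of_nonneg_right
            (Real.rpow_le_rpow (le_of_lt hx0) hxabs (by linarith)) (by positivity)
        calc |x| ^ ((Nψ:ℝ)) * (cσ * |x| ^ (-(2*H+1)) + CK)
            = cσ * (|x| ^ ((Nψ:ℝ)) * |x| ^ (-(2*H+1))) + CK * |x| ^ ((Nψ:ℝ)) := by ring
          _ ≤ cσ * |x| ^ p + CK * (π ^ (2*H+1) * |x| ^ p) :=
              add_le_add (mul_le_mul_of_nonneg_left (le_of_eq e1) (le_of_lt hcσ))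
                (mul_le_mul_of_nonneg_left e2 hCK0)
          _ = c₂ * |x| ^ p := by rw [hc₂def]; ring
    have hmin0 : (0:ℝ) ≤ min (A ^ ((Nψ:ℝ)) * |x| ^ ((Nψ:ℝ))) ((A*|x|) ^ (-α)) :=
      le_min (by positivity) (by positivity)
    calc ‖HH j x‖ * ‖HH J x‖ * (∑' ℓ : ℤ, cσ * |x + 2 * π * ℓ| ^ (-(2 * H + 1) : ℝ))
        ≤ (c₁ * |x| ^ ((Nψ:ℝ))) * (Cb * A ^ ((1:ℝ)/2)
            * min (A ^ ((Nψ:ℝ)) * |x| ^ ((Nψ:ℝ))) ((A*|x|) ^ (-α)))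
          * (cσ * |x| ^ (-(2*H+1)) + CK) := by
          apply mul_le_mul _ hG hGnn
          · exact mul_nonneg (by positivity) (mul_nonneg (by positivity) hmin0)
          · exact mul_le_mul hHj hHJ (norm_nonneg _) (by positivity)
      _ = (c₁ * Cb * A ^ ((1:ℝ)/2)
            * min (A ^ ((Nψ:ℝ)) * |x| ^ ((Nψ:ℝ))) ((A*|x|) ^ (-α)))
          * (|x| ^ ((Nψ:ℝ)) * (cσ * |x| ^ (-(2*H+1)) + CK)) := by ring
      _ ≤ (c₁ * Cb * A ^ ((1:ℝ)/2)
            * min (A ^ ((Nψ:ℝ)) * |x| ^ ((Nψ:ℝ))) ((A*|x|) ^ (-α)))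
          * (c₂ * |x| ^ p) := by
          exact mul_le_mul_of_nonneg_left hinner
            (mul_nonneg (by positivity) hmin0)
      _ = B x := by rw [hBdef, hCTdef]; ring
  -- integrability of B on Ioc (-π) π
  have hBint : IntegrableOn B (Set.Ioc (-π) π) volume :=
    (intervalIntegrable_iff_integrableOn_Ioc_of_le (by linarith)).1
      (hII (-π) π le_rfl (by linarith) le_rfl)
  have hne : ∀ᵐ x ∂(volume.restrict (Set.Ioc (-π) π)), x ≠ π := by
    refine ae_restrict_of_ae ?_
    rw [ae_iff]
    have h5 : {x : ℝ | ¬ x ≠ π} = {π} := by ext y; simp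
    rw [h5]
    exact measure_singleton π
  -- main chain
  have hright : (∫ x in δ..π, B x) ≤ CT*C₃*A^γ + CT*C₄*(1+(J:ℝ))*A^((1:ℝ)/2 - α) := by
    have h0notin : (0:ℝ) ∉ Set.uIcc δ π := by
      rw [Set.uIcc_of_le (by linarith)]
      intro hmem; exact absurd hmem.1 (by linarith)
    have hIIq : IntervalIntegrable (fun x => CT * A^((1:ℝ)/2 - α) * x^q) volume δ π :=
      (intervalIntegral.intervalIntegrable_rpow (Or.inr h0notin)).const_mul _
    have hbd : ∀ x ∈ Set.Icc δ π, B x ≤ CT * A^((1:ℝ)/2 - α) * x ^ q := by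
      intro x hxm
      have hx0 : 0 < x := lt_of_lt_of_le hδ0 hxm.1
      have habs : |x| = x := abs_of_pos hx0
      have e1 : A^((1:ℝ)/2) * A^(-α) = A^((1:ℝ)/2 - α) := by
        rw [hmul]; congr 1; try ring
      have e2 : x^(-α) * x^p = x^q := by
        rw [← Real.rpow_add hx0]; congr 1
        try rw [hqdef]
        try ring
      calc B x ≤ CT * A ^ ((1:ℝ)/2) * ((A*|x|) ^ (-α)) * |x| ^ p := by
            rw [hBdef]
            exact mul_le_mul_of_nonneg_right
              (mul_le_mul_of_nonneg_left (min_le_right _ _) (by positivity)) (by positivity)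
        _ = CT * (A^((1:ℝ)/2) * A^(-α)) * (x^(-α) * x^p) := by
            rw [habs, Real.mul_rpow (le_of_lt hA0) (le_of_lt hx0)]
            ring
        _ = CT * A^((1:ℝ)/2 - α) * x ^ q := by rw [e1, e2]
    have h5 := hIq J
    rw [← hAdef, ← hδdef] at h5
    calc (∫ x in δ..π, B x) ≤ ∫ x in δ..π, CT * A^((1:ℝ)/2 - α) * x^q :=
          intervalIntegral.integral_mono_on (by linarith)
            (hII δ π (by linarith) (by linarith) le_rfl) hIIq hbd
      _ = CT * A^((1:ℝ)/2 - α) * ∫ x in δ..π, x^q :=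
          intervalIntegral.integral_const_mul _ _
      _ ≤ CT * A^((1:ℝ)/2 - α) * (C₃ * δ^(q+1) + C₄ * (1+(J:ℝ))) :=
          mul_le_mul_of_nonneg_left h5 (by positivity)
      _ = CT*C₃*A^γ + CT*C₄*(1+(J:ℝ))*A^((1:ℝ)/2 - α) := by
          rw [hδpow (q+1)]
          have e3 : A^((1:ℝ)/2 - α) * A^(-(q+1)) = A^γ := by
            rw [hmul]; congr 1; rw [hγdef, hqdef, hpdef]; try ring
          calc CT * A^((1:ℝ)/2 - α) * (C₃ * A^(-(q+1)) + C₄ * (1+(J:ℝ)))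
              = CT*C₃*(A^((1:ℝ)/2 - α) * A^(-(q+1))) + CT*C₄*(1+(J:ℝ))*A^((1:ℝ)/2 - α) := by
                ring
            _ = CT*C₃*A^γ + CT*C₄*(1+(J:ℝ))*A^((1:ℝ)/2 - α) := by rw [e3]
  have hleft : (∫ x in (-π)..(-δ), B x) = ∫ x in δ..π, B x := by
    have h5 := intervalIntegral.integral_comp_neg (a := δ) (b := π) (f := B)
    simp only [hBev] at h5
    exact h5.symm
  have hmid : (∫ x in (-δ)..δ, B x) ≤ 2 * CT * A^γ := by
    have hbd : ∀ x ∈ Set.Icc (-δ) δ, B x ≤ CT * A ^ ((1:ℝ)/2) * A ^ ((Nψ:ℝ)) * δ ^ e := by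
      intro x hxm
      have hxd : |x| ≤ δ := abs_le.2 ⟨hxm.1, hxm.2⟩
      calc B x ≤ CT * A ^ ((1:ℝ)/2) * (A ^ ((Nψ:ℝ)) * |x| ^ ((Nψ:ℝ))) * |x| ^ p := by
            rw [hBdef]
            exact mul_le_mul_of_nonneg_right
              (mul_le_mul_of_nonneg_left (min_le_left _ _) (by positivity)) (by positivity)
        _ = CT * A ^ ((1:ℝ)/2) * A ^ ((Nψ:ℝ)) * (|x| ^ ((Nψ:ℝ)) * |x| ^ p) := by ring
        _ ≤ CT * A ^ ((1:ℝ)/2) * A ^ ((Nψ:ℝ)) * δ ^ e :=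
            mul_le_mul_of_nonneg_left (hxNp x δ hδ0 hxd) (by positivity)
    calc (∫ x in (-δ)..δ, B x) ≤ ∫ _x in (-δ)..δ, CT * A ^ ((1:ℝ)/2) * A ^ ((Nψ:ℝ)) * δ ^ e :=
          intervalIntegral.integral_mono_on (by linarith)
            (hII (-δ) δ (by linarith) (by linarith) (by linarith))
            intervalIntegrable_const hbd
      _ = (δ - -δ) * (CT * A ^ ((1:ℝ)/2) * A ^ ((Nψ:ℝ)) * δ ^ e) := by
          rw [intervalIntegral.integral_const, smul_eq_mul]
      _ = 2 * CT * A^γ := by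
          have hδA : δ = A^(-1:ℝ) := by rw [hδdef, ← Real.rpow_neg_one]
          rw [hδpow e]
          calc (δ - -δ) * (CT * A ^ ((1:ℝ)/2) * A ^ ((Nψ:ℝ)) * A ^ (-e))
              = 2 * CT * (A^(-1:ℝ) * (A^((1:ℝ)/2) * (A^((Nψ:ℝ)) * A^(-e)))) := by
                rw [hδA]; ring
            _ = 2 * CT * A^γ := by
                rw [hmul, hmul, hmul]
                congr 1
                rw [hγdef, hedef, hpdef]; try ring
  have hsplit : (∫ x in Set.Ioc (-π) π, B x) =
      (∫ x in (-π)..(-δ), B x) + (∫ x in (-δ)..δ, B x) + (∫ x in δ..π, B x) := by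
    rw [intervalIntegral.integral_add_adjacent_intervals
        (hII (-π) (-δ) le_rfl (by linarith) (by linarith))
        (hII (-δ) δ (by linarith) (by linarith) (by linarith)),
      intervalIntegral.integral_add_adjacent_intervals
        (hII (-π) δ le_rfl (by linarith) (by linarith))
        (hII δ π (by linarith) (by linarith) le_rfl)]
    exact (intervalIntegral.integral_of_le (by linarith)).symm
  have hnorm : ‖crossSpecFBM HH H σ2 j J r‖ ≤ ∫ x in Set.Ioc (-π) π, B x := by
    rw [crossSpecFBM]
    apply MeasureTheory.norm_integral_le_of_norm_le hBint
    filter_upwards [ae_restrict_mem measurableSet_Ioc, hne] with x hx1 hx2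
    exact hptwise x ⟨le_of_lt hx1.1, lt_of_le_of_ne hx1.2 hx2⟩
  have hfin : 2*CT*A^γ + 2*(CT*C₃*A^γ + CT*C₄*(1+(J:ℝ))*A^((1:ℝ)/2 - α)) =
      2*CT*(1+C₃) * A^γ + 2*CT*C₄*(1+(J:ℝ))*A^((1:ℝ)/2 - α) := by ring
  linarith [hnorm, hsplit, hleft, hmid, hright, hfin]

open Topology in
lemma aux_final
    (H σ2 : ℝ) (hH : H ∈ Set.Ioo (0:ℝ) 1) (hσ2 : 0 < σ2)
    (Nψ : ℕ) (hNψ : 2 ≤ Nψ) (α : ℝ) (hα : 1 < α)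
    (K₁ K₂ : ℝ) (hK₁ : 0 ≤ K₁) (hK₂ : 0 ≤ K₂)
    (F : ℕ → ℝ → ℝ)
    (hmaster : ∀ (J : ℕ) (r : ℝ),
      F J r ≤ K₁ * ((2:ℝ)^J) ^ (2*H + 1/2 - (Nψ:ℝ)) + K₂ * (1+(J:ℝ)) * ((2:ℝ)^J) ^ ((1:ℝ)/2 - α))
    (m : ℕ → ℕ) (hm : Tendsto (fun n => ((2:ℝ) ^ (m n))) atTop atTop)
    (j j' : ℕ) :
    ∃ g₁ g₂ : ℕ → ℝ,
      (g₁ =O[atTop] fun n => ((2:ℝ) ^ (m n)) ^ (2 * H + 1/2 - (Nψ : ℝ))) ∧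
      (g₂ =o[atTop] fun n => ((2:ℝ) ^ (m n)) ^ (-(1/2) : ℝ)) ∧
      ∀ (n : ℕ) (r : ℝ), F (j' + m n) r ≤ g₁ n + g₂ n := by
  set γ : ℝ := 2*H + 1/2 - (Nψ:ℝ) with hγdef
  refine ⟨fun n => K₁ * ((2:ℝ)^(j' + m n)) ^ γ,
          fun n => K₂ * (1 + ((j' + m n : ℕ):ℝ)) * ((2:ℝ)^(j' + m n)) ^ ((1:ℝ)/2 - α),
          ?_, ?_, ?_⟩
  · rw [isBigO_iff]
    refine ⟨|K₁| * ((2:ℝ)^j') ^ γ, Eventually.of_forall fun n => ?_⟩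
    have h2 : ((2:ℝ)^(j' + m n)) ^ γ = ((2:ℝ)^j') ^ γ * ((2:ℝ)^(m n)) ^ γ := by
      rw [pow_add, Real.mul_rpow (by positivity) (by positivity)]
    rw [Real.norm_eq_abs, Real.norm_eq_abs, h2, abs_mul,
      abs_of_nonneg (by positivity : (0:ℝ) ≤ ((2:ℝ)^j') ^ γ * ((2:ℝ)^(m n)) ^ γ),
      abs_of_nonneg (by positivity : (0:ℝ) ≤ ((2:ℝ)^(m n)) ^ γ)]
    exact le_of_eq (by ring)
  · have hmono : Tendsto (fun n => m n) atTop atTop := by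
      rw [tendsto_atTop_atTop]
      intro b
      have hev := hm.eventually_ge_atTop ((2:ℝ)^b)
      rw [eventually_atTop] at hev
      obtain ⟨i, hi⟩ := hev
      refine ⟨i, fun a ha => ?_⟩
      have h3 := hi a ha
      exact (pow_le_pow_iff_right₀ (by norm_num : (1:ℝ) < 2)).1 h3
    set r0 : ℝ := (2:ℝ) ^ ((1:ℝ) - α) with hr0def
    have hr0pos : 0 < r0 := Real.rpow_pos_of_pos (by norm_num) _
    have hr01 : r0 < 1 := Real.rpow_lt_one_of_one_lt_of_neg (by norm_num) (by linarith)
    have hF : Tendsto (fun k : ℕ =>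
        (K₂ * ((2:ℝ)^j')^((1:ℝ)/2 - α)) * ((1 + (j':ℝ) + k) * r0^k)) atTop (𝓝 0) := by
      have h1 : Tendsto (fun k : ℕ => (k:ℝ) * r0^k) atTop (𝓝 0) := by
        have := tendsto_pow_const_mul_const_pow_of_lt_one 1 hr0pos.le hr01
        simpa using this
      have h2 : Tendsto (fun k : ℕ => r0^k) atTop (𝓝 0) :=
        tendsto_pow_atTop_nhds_zero_of_lt_one hr0pos.le hr01
      have h3 : Tendsto (fun k : ℕ => (1 + (j':ℝ)) * r0^k + (k:ℝ)*r0^k) atTop (𝓝 0) := by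
        simpa using (h2.const_mul (1+(j':ℝ))).add h1
      have h4 := h3.const_mul (K₂ * ((2:ℝ)^j')^((1:ℝ)/2 - α))
      simp only [mul_zero] at h4
      exact Tendsto.congr (fun k => by ring) h4
    rw [isLittleO_iff_tendsto (fun n h => absurd h (by positivity))]
    have hptw : ∀ n : ℕ,
        (K₂ * ((2:ℝ)^j')^((1:ℝ)/2 - α)) * ((1 + (j':ℝ) + (m n)) * r0^(m n)) =
        (K₂ * (1 + ((j' + m n : ℕ):ℝ)) * ((2:ℝ)^(j'+m n))^((1:ℝ)/2-α))
          / ((2:ℝ)^(m n))^(-(1/2):ℝ) := by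
      intro n
      have ha0 : (0:ℝ) < (2:ℝ)^(m n) := by positivity
      have hsplit : ((2:ℝ)^(j'+m n))^((1:ℝ)/2-α)
          = ((2:ℝ)^j')^((1:ℝ)/2-α) * ((2:ℝ)^(m n))^((1:ℝ)/2-α) := by
        rw [pow_add, Real.mul_rpow (by positivity) (by positivity)]
      have hcast : ((j' + m n : ℕ):ℝ) = (j':ℝ) + (m n : ℝ) := by push_cast; ring
      have hr0k : r0 ^ (m n) = ((2:ℝ)^(m n))^((1:ℝ)-α) := by
        rw [hr0def, ← Real.rpow_natCast ((2:ℝ) ^ ((1:ℝ) - α)) (m n),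
          ← Real.rpow_natCast (2:ℝ) (m n),
          ← Real.rpow_mul (by norm_num : (0:ℝ) ≤ 2),
          ← Real.rpow_mul (by norm_num : (0:ℝ) ≤ 2)]
        congr 1
        ring
      have hdiv : ((2:ℝ)^(m n))^((1:ℝ)/2-α) / ((2:ℝ)^(m n))^(-(1/2):ℝ)
          = ((2:ℝ)^(m n))^((1:ℝ)-α) := by
        rw [← Real.rpow_sub ha0]
        congr 1
        ring
      rw [hr0k, ← hdiv, hsplit, hcast]
      field_simp
      ring
    exact Tendsto.congr (fun n => hptw (n)) (hF.comp hmono)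
  · intro n r
    exact hmaster (j' + m n) r

/-- Cross-scale covariance bound for fBm wavelet coefficients: with a dyadic sequence
`a(n) = 2^{m(n)} → ∞`, `α > 1` and `N_ψ ≥ 2`, uniformly in `k, k'`:
`|𝔼 d(2^j,k) d(a(n)2^{j'},k')| ≤ O(a(n)^{2H+1/2−N_ψ}) + o(a(n)^{−1/2})`. -/
theorem fbm_cross_scale_bound
    (H σ2 : ℝ) (hH : H ∈ Set.Ioo (0:ℝ) 1) (hσ2 : 0 < σ2)
    (Nψ : ℕ) (hNψ : 2 ≤ Nψ) (α : ℝ) (hα : 1 < α)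
    (HH : ℕ → ℝ → ℂ) (Cb : ℝ) (hCb : 0 < Cb)
    (hbound : ∀ (J : ℕ) (x : ℝ), x ∈ Set.Ico (-π) π →
      ‖HH J x‖ ≤ Cb * (2:ℝ) ^ ((J:ℝ)/2) * |(2:ℝ) ^ J * x| ^ (Nψ : ℕ)
        / (1 + (2:ℝ) ^ J * |x|) ^ (α + Nψ))
    (m : ℕ → ℕ) (hm : Tendsto (fun n => ((2:ℝ) ^ (m n))) atTop atTop)
    (j j' : ℕ) :
    ∃ g₁ g₂ : ℕ → ℝ,
      (g₁ =O[atTop] fun n => ((2:ℝ) ^ (m n)) ^ (2 * H + 1/2 - (Nψ : ℝ))) ∧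
      (g₂ =o[atTop] fun n => ((2:ℝ) ^ (m n)) ^ (-(1/2) : ℝ)) ∧
      ∀ (n : ℕ) (k k' : ℤ),
        ‖crossSpecFBM HH H σ2 j (j' + m n)
            ((2:ℝ) ^ j * k - (2:ℝ) ^ (j' + m n) * k')‖ ≤ g₁ n + g₂ n := by
  obtain ⟨K₁, K₂, hK₁, hK₂, hmaster⟩ :=
    aux_master H σ2 hH hσ2 Nψ hNψ α hα HH Cb hCb hbound j
  obtain ⟨g₁, g₂, hg₁, hg₂, hg⟩ :=
    aux_final H σ2 hH hσ2 Nψ hNψ α hα K₁ K₂ hK₁ hK₂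
      (fun J r => ‖crossSpecFBM HH H σ2 j J r‖) hmaster m hm j j'
  exact ⟨g₁, g₂, hg₁, hg₂, fun n k k' => hg n _⟩
end

section
/- Let ζ: ℤ → ℝ satisfy |ζ(r)| ≤ C|r|^{H−1/2}e^{−λ|r|} for all sufficiently large |r| (some C, λ > 0, H > 0), and fix octaves j, j'. Then, with n_j = n/2^j and n_{j'} = n/2^{j'}, (2^{j+j'}/n) Σ_{k=1}^{n_j} Σ_{k'=1}^{n_{j'}} ζ²(2^j k − 2^{j'} k') → 2^{min{j,j'}} Σ_{r∈ℤ} ζ²(r·2^{min{j,j'}}) as n → ∞. -/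
set_option maxHeartbeats 1000000

open Real Filter

-- Summability of squared zeta from the exponential bound
lemma sumsq_aux (ζ : ℤ → ℝ) (H lam C R : ℝ) (hlam : 0 < lam) (hC : 0 < C)
    (hbound : ∀ r : ℤ, R ≤ |(r : ℝ)| →
      |ζ r| ≤ C * |(r : ℝ)| ^ (H - 1/2 : ℝ) * Real.exp (-(lam * |(r : ℝ)|))) :
    Summable (fun r : ℤ => ζ r ^ 2) := by
  have hgeo : Summable (fun n : ℕ => Real.exp (-lam) ^ n) :=
    summable_geometric_of_lt_one (Real.exp_nonneg _) (by
      rw [Real.exp_lt_one_iff]; linarith)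
  have hnat : ∀ n : ℕ, Real.exp (-(lam * (n : ℝ))) = Real.exp (-lam) ^ n := by
    intro n
    rw [← Real.exp_nat_mul]; ring_nf
  have h1 : Summable (fun r : ℤ => Real.exp (-(lam * |(r : ℝ)|))) := by
    apply Summable.of_nat_of_neg
    · apply hgeo.congr
      intro n; rw [← hnat n]
      simp [abs_of_nonneg (by positivity : (0:ℝ) ≤ (n:ℝ))]
    · apply hgeo.congr
      intro n; rw [← hnat n]
      push_cast
      rw [abs_neg, abs_of_nonneg (by positivity : (0:ℝ) ≤ (n:ℝ))]
  have htend := tendsto_rpow_mul_exp_neg_mul_atTop_nhds_zero (2*H - 1) lam hlam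
  have hev : ∀ᶠ x : ℝ in atTop, x ^ (2*H-1 : ℝ) * Real.exp (-lam * x) < 1 / C ^ 2 :=
    htend.eventually_lt_const (by positivity)
  obtain ⟨T, hT⟩ := eventually_atTop.1 hev
  set M : ℝ := max (max R T) 1 with hM
  apply Summable.of_norm_bounded_eventually h1
  rw [Filter.eventually_cofinite]
  apply Set.Finite.subset (Set.finite_Icc (-(⌈M⌉)) ⌈M⌉)
  intro r hr
  simp only [Set.mem_setOf_eq] at hr
  by_contra hmem
  apply hr
  have hR : M ≤ |(r : ℝ)| := by
    simp only [Set.mem_Icc, not_and_or, not_le] at hmem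
    have hceil : M ≤ (⌈M⌉ : ℝ) := Int.le_ceil M
    rcases hmem with h | h
    · have h' : (r : ℝ) < -(⌈M⌉ : ℝ) := by exact_mod_cast h
      calc M ≤ (⌈M⌉:ℝ) := hceil
        _ ≤ -(r:ℝ) := by linarith
        _ ≤ |(r:ℝ)| := neg_le_abs _
    · have h' : (⌈M⌉ : ℝ) < (r : ℝ) := by exact_mod_cast h
      calc M ≤ (⌈M⌉:ℝ) := hceil
        _ ≤ (r:ℝ) := le_of_lt h'
        _ ≤ |(r:ℝ)| := le_abs_self _
  set x : ℝ := |(r : ℝ)| with hx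
  have hx1 : (1:ℝ) ≤ x := le_trans (le_max_right _ _) hR
  have hx0 : (0:ℝ) < x := by linarith
  have hRx : R ≤ x := le_trans (le_trans (le_max_left _ _) (le_max_left _ _)) hR
  have hTx : T ≤ x := le_trans (le_trans (le_max_right _ _) (le_max_left _ _)) hR
  have hb := hbound r hRx
  have hsq : ζ r ^ 2 ≤ (C * x ^ (H - 1/2 : ℝ) * Real.exp (-(lam * x))) ^ 2 := by
    rw [← sq_abs (ζ r)]
    exact pow_le_pow_left₀ (abs_nonneg _) hb 2
  have h1' : x ^ (H-1/2:ℝ) * x ^ (H-1/2:ℝ) = x ^ (2*H-1:ℝ) := by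
    rw [← Real.rpow_add hx0]; ring_nf
  have hexpand : (C * x ^ (H - 1/2 : ℝ) * Real.exp (-(lam * x))) ^ 2
      = (C ^ 2 * (x ^ (2*H - 1 : ℝ) * Real.exp (-lam * x))) * Real.exp (-(lam * x)) := by
    rw [neg_mul, ← h1']; ring
  have hlt : C ^ 2 * (x ^ (2*H-1:ℝ) * Real.exp (-lam * x)) ≤ 1 := by
    have := hT x hTx
    have hC2 : (0:ℝ) < C ^ 2 := by positivity
    rw [div_eq_mul_inv, one_mul] at this
    calc C ^ 2 * (x ^ (2*H-1:ℝ) * Real.exp (-lam * x)) ≤ C ^ 2 * (C^2)⁻¹ :=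
          mul_le_mul_of_nonneg_left (le_of_lt this) (le_of_lt hC2)
      _ = 1 := mul_inv_cancel₀ (ne_of_gt hC2)
  have : ‖ζ r ^ 2‖ = ζ r ^ 2 := by
    rw [Real.norm_eq_abs, abs_of_nonneg (sq_nonneg _)]
  rw [this]
  calc ζ r ^ 2 ≤ (C * x ^ (H - 1/2 : ℝ) * Real.exp (-(lam * x))) ^ 2 := hsq
    _ = (C ^ 2 * (x ^ (2*H - 1 : ℝ) * Real.exp (-lam * x))) * Real.exp (-(lam * x)) := hexpand
    _ ≤ 1 * Real.exp (-(lam * x)) :=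
        mul_le_mul_of_nonneg_right hlt (Real.exp_nonneg _)
    _ = Real.exp (-(lam * x)) := one_mul _


lemma counting_aux (ζ : ℤ → ℝ) (hsum : Summable (fun r : ℤ => ζ r ^ 2))
    (j j' : ℕ) (hjj : j ≤ j') :
    Tendsto (fun ν : ℕ =>
        (1 / (ν : ℝ)) *
          ∑ k ∈ Finset.Icc 1 (2 ^ j' * ν), ∑ k' ∈ Finset.Icc 1 (2 ^ j * ν),
            (ζ ((2:ℤ) ^ j * (k : ℤ) - (2:ℤ) ^ j' * (k' : ℤ))) ^ 2)
      atTop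
      (nhds ((2:ℝ) ^ j * ∑' r : ℤ, (ζ (r * 2 ^ j)) ^ 2)) := by
  classical
  set a : ℕ := 2 ^ (j' - j) with ha
  set g : ℕ := 2 ^ j with hg
  have ha1 : 1 ≤ a := Nat.one_le_two_pow
  have hg1 : 1 ≤ g := Nat.one_le_two_pow
  have hag : 2 ^ j' = a * g := by
    rw [ha, hg, ← pow_add, Nat.sub_add_cancel hjj]
  -- φ
  set φ : ℤ → ℝ := fun r => ζ ((g : ℤ) * r) ^ 2 with hφ
  have hφ0 : ∀ r, 0 ≤ φ r := fun r => sq_nonneg _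
  have hφsum : Summable φ := by
    have hinj : Function.Injective (fun r : ℤ => (g:ℤ) * r) := fun x y hxy =>
      mul_left_cancel₀ (by positivity) hxy
    exact Summable.comp_injective hsum hinj
  -- fiber counts
  set S : ℕ → Finset (ℕ × ℕ) := fun ν =>
    (Finset.Icc 1 (a * g * ν)) ×ˢ (Finset.Icc 1 (g * ν)) with hS
  set m : ℕ × ℕ → ℤ := fun p => (p.1 : ℤ) - (a : ℤ) * p.2 with hm
  set c : ℕ → ℤ → ℕ := fun ν r => ((S ν).filter (fun p => m p = r)).card with hc
  -- upper bound on counts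
  have hub : ∀ ν r, c ν r ≤ g * ν := by
    intro ν r
    have : ((S ν).filter (fun p => m p = r)).card ≤ (Finset.Icc 1 (g * ν)).card := by
      apply Finset.card_le_card_of_injOn Prod.snd
      · intro p hp
        rw [Finset.mem_coe, Finset.mem_filter, hS, Finset.mem_product] at hp
        exact hp.1.2
      · intro p hp q hq hpq
        simp only [Finset.coe_filter, Set.mem_setOf_eq] at hp hq
        have h1 : (p.1 : ℤ) = r + (a:ℤ) * p.2 := by
          have := hp.2; simp only [hm] at this; linarith
        have h2 : (q.1 : ℤ) = r + (a:ℤ) * q.2 := by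
          have := hq.2; simp only [hm] at this; linarith
        have : (p.1 : ℤ) = (q.1 : ℤ) := by rw [h1, h2, hpq]
        exact Prod.ext (by exact_mod_cast this) hpq
    simpa [Nat.card_Icc] using this
  -- lower bound on counts
  have hlb : ∀ ν r, g * ν ≤ c ν r + 2 * r.natAbs := by
    intro ν r
    set t : ℕ := r.natAbs with ht
    have hcard : (Finset.Icc (t + 1) (g * ν - t)).card ≤ c ν r := by
      apply Finset.card_le_card_of_injOn (fun k' : ℕ => (((r + (a:ℤ) * (k':ℤ)).toNat, k') : ℕ × ℕ))
      · intro k' hk'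
        rw [Finset.mem_coe, Finset.mem_Icc] at hk'
        obtain ⟨hk1, hk2⟩ := hk'
        have hk3 : k' + t ≤ g * ν := by omega
        have hrk : (r : ℤ) + (a:ℤ) * k' ≥ 1 := by
          have h1 : (t : ℤ) + 1 ≤ (k' : ℤ) := by exact_mod_cast hk1
          have h2 : (k' : ℤ) ≤ (a:ℤ) * k' := le_mul_of_one_le_left (by positivity) (by exact_mod_cast ha1)
          have h3 : -(t:ℤ) ≤ r := by rw [ht]; push_cast; exact neg_abs_le r
          linarith
        have hrk2 : (r : ℤ) + (a:ℤ) * k' ≤ (a:ℤ) * (g * ν) := by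
          have h3 : (r:ℤ) ≤ t := by rw [ht]; push_cast; exact le_abs_self r
          have h4 : (k' : ℤ) + t ≤ (g:ℤ) * ν := by exact_mod_cast hk3
          have h5 : (t:ℤ) ≤ (a:ℤ) * t := le_mul_of_one_le_left (by positivity) (by exact_mod_cast ha1)
          nlinarith [show (1:ℤ) ≤ (a:ℤ) from by exact_mod_cast ha1]
        rw [Finset.mem_coe, Finset.mem_filter, hS, Finset.mem_product]
        refine ⟨⟨?_, ?_⟩, ?_⟩
        · rw [Finset.mem_Icc]
          dsimp only
          have h6 : ((r + (a:ℤ) * k').toNat : ℤ) = r + (a:ℤ) * k' := Int.toNat_of_nonneg (by linarith)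
          constructor
          · omega
          · rw [Int.toNat_le]
            push_cast
            ring_nf
            ring_nf at hrk2
            linarith
        · rw [Finset.mem_Icc]; dsimp only; omega
        · rw [hm]
          simp only
          rw [Int.toNat_of_nonneg (by linarith)]
          ring
      · intro p hp q hq hpq
        exact congrArg Prod.snd hpq
    have : g * ν - t ≤ c ν r + t := by
      rcases le_or_gt (t + 1) (g * ν - t) with h | h
      · have := hcard
        rw [Nat.card_Icc] at this
        omega
      · omega
    omega
  -- pointwise convergence of c ν r / ν
  have hpt : ∀ r : ℤ, Tendsto (fun ν : ℕ => (c ν r : ℝ) / ν) atTop (nhds (g : ℝ)) := by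
    intro r
    have hlow : Tendsto (fun ν : ℕ => (g : ℝ) - 2 * r.natAbs / ν) atTop (nhds ((g:ℝ) - 0)) := by
      apply Tendsto.sub tendsto_const_nhds
      exact Tendsto.div_atTop tendsto_const_nhds tendsto_natCast_atTop_atTop
    rw [sub_zero] at hlow
    apply tendsto_of_tendsto_of_tendsto_of_le_of_le' hlow tendsto_const_nhds
    · filter_upwards [eventually_ge_atTop 1] with ν hν
      have hν0 : (0:ℝ) < ν := by exact_mod_cast hν
      have := hlb ν r
      have h' : (g:ℝ) * ν ≤ (c ν r : ℝ) + 2 * r.natAbs := by exact_mod_cast this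
      have hq : ((g:ℝ) * ν - 2 * r.natAbs) / ν ≤ (c ν r : ℝ) / ν :=
        (div_le_div_iff_of_pos_right hν0).mpr (by linarith)
      have heq : ((g:ℝ) * ν - 2 * r.natAbs) / ν = (g:ℝ) - 2 * r.natAbs / ν := by
        rw [sub_div, mul_div_cancel_right₀ _ (ne_of_gt hν0)]
      linarith
    · filter_upwards [eventually_ge_atTop 1] with ν hν
      have hν0 : (0:ℝ) < ν := by exact_mod_cast hν
      have := hub ν r
      have h' : (c ν r : ℝ) ≤ (g:ℝ) * ν := by exact_mod_cast this
      rw [div_le_iff₀ hν0]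
      linarith
  -- rewrite the scaled double sum as a tsum over ℤ
  have hzero : ∀ ν : ℕ, ∀ r : ℤ, r ∉ (S ν).image m → ((c ν r : ℝ) * φ r) = 0 := by
    intro ν r hr
    have : c ν r = 0 := by
      rw [hc]
      simp only [Finset.card_eq_zero, Finset.filter_eq_empty_iff]
      intro p hp hmp
      exact hr (hmp ▸ Finset.mem_image_of_mem m hp)
    rw [this]
    simp
  have hD2 : ∀ ν : ℕ, ∑ p ∈ S ν, φ (m p) = ∑' r : ℤ, ((c ν r : ℝ) * φ r) := by
    intro ν
    rw [tsum_eq_sum (hzero ν), Finset.sum_comp]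
    apply Finset.sum_congr rfl
    intro r _
    rw [hc]
    simp [nsmul_eq_mul]
  have hrw : ∀ ν : ℕ,
      (1 / (ν : ℝ)) * ∑ k ∈ Finset.Icc 1 (2 ^ j' * ν), ∑ k' ∈ Finset.Icc 1 (2 ^ j * ν),
        (ζ ((2:ℤ) ^ j * (k : ℤ) - (2:ℤ) ^ j' * (k' : ℤ))) ^ 2
      = ∑' r : ℤ, ((c ν r : ℝ) / ν) * φ r := by
    intro ν
    have hD : ∑ k ∈ Finset.Icc 1 (2 ^ j' * ν), ∑ k' ∈ Finset.Icc 1 (2 ^ j * ν),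
        (ζ ((2:ℤ) ^ j * (k : ℤ) - (2:ℤ) ^ j' * (k' : ℤ))) ^ 2
        = ∑ p ∈ S ν, φ (m p) := by
      rw [hS]
      rw [Finset.sum_product]
      rw [hag]
      apply Finset.sum_congr rfl
      intro k _
      apply Finset.sum_congr (by rw [hg])
      intro k' _
      rw [hφ, hm]
      simp only
      congr 2
      have e1 : ((2:ℤ) ^ j) = ((g : ℕ) : ℤ) := by exact_mod_cast hg.symm
      have e2 : ((2:ℤ) ^ j') = ((a : ℕ) : ℤ) * ((g : ℕ) : ℤ) := by exact_mod_cast hag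
      rw [e1, e2]
      ring
    rw [hD, hD2 ν, ← tsum_mul_left]
    apply tsum_congr
    intro r
    ring
  -- dominated convergence
  have hdct : Tendsto (fun ν : ℕ => ∑' r : ℤ, ((c ν r : ℝ) / ν) * φ r) atTop
      (nhds (∑' r : ℤ, (g : ℝ) * φ r)) := by
    apply tendsto_tsum_of_dominated_convergence (bound := fun r : ℤ => (g : ℝ) * φ r)
      (hφsum.mul_left _)
    · intro r
      exact (hpt r).mul_const (φ r)
    · filter_upwards [eventually_ge_atTop 1] with ν hν
      intro r
      have hν0 : (0:ℝ) < ν := by exact_mod_cast hν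
      have hcd : (c ν r : ℝ) / ν ≤ (g : ℝ) := by
        rw [div_le_iff₀ hν0]
        exact_mod_cast hub ν r
      have hcd0 : (0:ℝ) ≤ (c ν r : ℝ) / ν := by positivity
      rw [Real.norm_eq_abs, abs_of_nonneg (mul_nonneg hcd0 (hφ0 r))]
      exact mul_le_mul_of_nonneg_right hcd (hφ0 r)
  have hlim : (∑' r : ℤ, (g : ℝ) * φ r) = (2:ℝ) ^ j * ∑' r : ℤ, (ζ (r * 2 ^ j)) ^ 2 := by
    rw [tsum_mul_left]
    congr 1
    · rw [hg]; push_cast; ring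
    · apply tsum_congr
      intro r
      rw [hφ]
      simp only
      congr 2
      rw [hg]
      push_cast
      ring
  rw [← hlim]
  exact hdct.congr (fun ν => (hrw ν).symm)


/-- Lattice counting limit for sample wavelet variance covariances: if
`|ζ(r)| ≤ C|r|^{H−1/2} e^{−λ|r|}` for all large `|r|`, then with `n = ν·2^{j+j'}`,
`n_j = n/2^j = 2^{j'}ν`, `n_{j'} = 2^{j}ν`,
`(2^{j+j'}/n) Σ_{k=1}^{n_j} Σ_{k'=1}^{n_{j'}} ζ²(2^j k − 2^{j'} k')
  → 2^{min{j,j'}} Σ_{r∈ℤ} ζ²(r·2^{min{j,j'}})` as `n → ∞`. -/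
theorem lattice_counting_limit
    (ζ : ℤ → ℝ) (H lam C R : ℝ) (hH : 0 < H) (hlam : 0 < lam) (hC : 0 < C)
    (hbound : ∀ r : ℤ, R ≤ |(r : ℝ)| →
      |ζ r| ≤ C * |(r : ℝ)| ^ (H - 1/2 : ℝ) * Real.exp (-(lam * |(r : ℝ)|)))
    (j j' : ℕ) :
    Tendsto (fun ν : ℕ =>
        (1 / (ν : ℝ)) *
          ∑ k ∈ Finset.Icc 1 (2 ^ j' * ν), ∑ k' ∈ Finset.Icc 1 (2 ^ j * ν),
            (ζ ((2:ℤ) ^ j * (k : ℤ) - (2:ℤ) ^ j' * (k' : ℤ))) ^ 2)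
      atTop
      (nhds ((2:ℝ) ^ (min j j') * ∑' r : ℤ, (ζ (r * 2 ^ (min j j'))) ^ 2)) := by
  rcases le_total j j' with h | h
  · rw [min_eq_left h]
    exact counting_aux ζ (sumsq_aux ζ H lam C R hlam hC hbound) j j' h
  · rw [min_eq_right h]
    set ζ' : ℤ → ℝ := fun r => ζ (-r) with hζ'
    have hb' : ∀ r : ℤ, R ≤ |(r : ℝ)| →
        |ζ' r| ≤ C * |(r : ℝ)| ^ (H - 1/2 : ℝ) * Real.exp (-(lam * |(r : ℝ)|)) := by
      intro r hr
      have habs : |((-r : ℤ) : ℝ)| = |(r : ℝ)| := by push_cast; rw [abs_neg]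
      have := hbound (-r) (by rw [habs]; exact hr)
      rw [habs] at this
      exact this
    have h1 := counting_aux ζ' (sumsq_aux ζ' H lam C R hlam hC hb') j' j h
    have hts : (∑' r : ℤ, (ζ' (r * 2 ^ j')) ^ 2) = ∑' r : ℤ, (ζ (r * 2 ^ j')) ^ 2 := by
      have := (Equiv.neg ℤ).tsum_eq (fun r : ℤ => (ζ (r * 2 ^ j')) ^ 2)
      rw [← this]
      apply tsum_congr
      intro r
      rw [hζ']
      simp only [Equiv.neg_apply]
      congr 2
      ring
    rw [hts] at h1
    apply h1.congr
    intro ν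
    congr 1
    rw [Finset.sum_comm]
    apply Finset.sum_congr rfl
    intro k _
    apply Finset.sum_congr rfl
    intro k' _
    rw [hζ']
    simp only
    congr 2
    ring
end
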